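/- arXiv:2510.15855 — 4 statements merged into one kernel-verified Lean document; each statement's English description precedes it below -/
import Mathlib

section
/- The topological group H(ω*), the group of self-homeomorphisms of ω* = βω \ ω with the compact-open topology, is crowded: it has no isolated points. -/
open Set Topology TopologicalSpace

/-- The compact-open topology on the group of self-homeomorphisms of a space:
the topology induced from the compact-open topology on `C(X, X)`. -/
instance homeomorphCompactOpen (X : Type*) [TopologicalSpace X] :
    TopologicalSpace (X ≃ₜ X) :=
  TopologicalSpace.induced (fun h : X ≃ₜ X => (h : C(X, X))) ContinuousMap.compactOpen

/-- The group of self-homeomorphisms of a space, under composition. -/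
instance homeomorphGroup (X : Type*) [TopologicalSpace X] : Group (X ≃ₜ X) where
  mul f g := g.trans f
  one := Homeomorph.refl X
  inv := Homeomorph.symm
  mul_assoc _ _ _ := Homeomorph.ext fun _ => rfl
  one_mul _ := Homeomorph.ext fun _ => rfl
  mul_one _ := Homeomorph.ext fun _ => rfl
  inv_mul_cancel f := Homeomorph.ext fun x => f.symm_apply_apply x

/-- The weight of a topological space: the least cardinality of a base of its topology. -/
noncomputable def TopologicalSpace.weight (X : Type u) [TopologicalSpace X] : Cardinal.{u} :=
  ⨅ B : {B : Set (Set X) // TopologicalSpace.IsTopologicalBasis B}, Cardinal.mk B.1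

/-- A set is an Fσ-set if it is a countable union of closed sets. -/
def IsFsigma {X : Type*} [TopologicalSpace X] (s : Set X) : Prop :=
  ∃ F : ℕ → Set X, (∀ n, IsClosed (F n)) ∧ s = ⋃ n, F n

/-- An F-space (for normal spaces): disjoint open Fσ-sets have disjoint closures. -/
def IsFSpace (X : Type*) [TopologicalSpace X] : Prop :=
  ∀ U V : Set X, IsOpen U → IsOpen V → IsFsigma U → IsFsigma V → Disjoint U V →
    Disjoint (closure U) (closure V)

/-- A Parovičenko space: a compact zero-dimensional F-space of weight `𝔠` in which
every nonempty Gδ-set has infinite interior. -/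
structure IsParovicenko (X : Type u) [TopologicalSpace X] : Prop where
  compact : CompactSpace X
  t2 : T2Space X
  zeroDim : TopologicalSpace.IsTopologicalBasis {s : Set X | IsClopen s}
  fSpace : IsFSpace X
  weight_eq : TopologicalSpace.weight X = Cardinal.continuum
  gdelta_int : ∀ s : Set X, IsGδ s → s.Nonempty → (interior s).Infinite

/-- The Gδ-modification of a topology: the topology generated by the Gδ-sets. -/
def gdeltaMod {X : Type*} (t : TopologicalSpace X) : TopologicalSpace X :=
  TopologicalSpace.generateFrom {s : Set X | @IsGδ X t s}

/-- The Čech–Stone remainder `βα \ α` of a space `α`. -/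
abbrev CechStoneRemainder (α : Type u) [TopologicalSpace α] : Type u :=
  {p : StoneCech α // p ∉ Set.range (stoneCechUnit : α → StoneCech α)}

/-- `ω* = βω \ ω`, the Čech–Stone remainder of the countable discrete space `ω`. -/
abbrev OmegaStar : Type := CechStoneRemainder ℕ

namespace CrowdedAux

open Filter Set

/-- The canonical map `StoneCech ℕ → Ultrafilter ℕ`. -/
noncomputable def phi : StoneCech ℕ → Ultrafilter ℕ :=
  stoneCechExtend (continuous_of_discreteTopology (f := (pure : ℕ → Ultrafilter ℕ)))

/-- The canonical map `Ultrafilter ℕ → StoneCech ℕ`. -/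
noncomputable def psi : Ultrafilter ℕ → StoneCech ℕ :=
  Ultrafilter.extend (stoneCechUnit : ℕ → StoneCech ℕ)

lemma continuous_phi : Continuous phi := continuous_stoneCechExtend _

lemma continuous_psi : Continuous psi := continuous_ultrafilter_extend _

lemma phi_unit (n : ℕ) : phi (stoneCechUnit n) = pure n :=
  congrFun (stoneCechExtend_extends _) n

lemma psi_pure (n : ℕ) : psi (pure n) = stoneCechUnit n :=
  congrFun (ultrafilter_extend_extends (stoneCechUnit : ℕ → StoneCech ℕ)) n

lemma psi_phi (x : StoneCech ℕ) : psi (phi x) = x := by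
  have h : psi ∘ phi = id :=
    stoneCech_hom_ext (continuous_psi.comp continuous_phi) continuous_id
      (funext fun n => by simp [Function.comp, phi_unit, psi_pure])
  exact congrFun h x

lemma phi_psi (u : Ultrafilter ℕ) : phi (psi u) = u := by
  have h : phi ∘ psi = id := by
    refine (continuous_phi.comp continuous_psi).ext_on denseRange_pure continuous_id ?_
    rintro _ ⟨n, rfl⟩
    simp [Function.comp, phi_unit, psi_pure]
  exact congrFun h u

lemma phi_injective : Function.Injective phi := fun a b h => by
  rw [← psi_phi a, h, psi_phi]

lemma psi_not_unit {u : Ultrafilter ℕ} (hu : ∀ n, u ≠ pure n) :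
    psi u ∉ Set.range (stoneCechUnit : ℕ → StoneCech ℕ) := by
  rintro ⟨n, hn⟩
  exact hu n (by rw [← phi_psi u, ← hn, phi_unit])

lemma phi_free {x : StoneCech ℕ} (hx : x ∉ Set.range (stoneCechUnit : ℕ → StoneCech ℕ)) :
    ∀ n, phi x ≠ pure n := fun n h =>
  hx ⟨n, by rw [← psi_phi x, h, psi_pure]⟩

lemma free_of_le_cofinite (u : Ultrafilter ℕ) (h : ↑u ≤ (Filter.cofinite : Filter ℕ)) :
    ∀ n, u ≠ pure n := by
  intro n hn
  have h1 : {n} ∈ u := by rw [hn]; exact Ultrafilter.mem_pure.mpr rfl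
  have h2 : ({n} : Set ℕ)ᶜ ∈ u :=
    Filter.le_def.mp h _ (by rw [Filter.mem_cofinite]; simp)
  exact Ultrafilter.compl_mem_iff_notMem.mp h2 h1

lemma infinite_mem {u : Ultrafilter ℕ} (hu : ∀ n, u ≠ pure n) {s : Set ℕ} (hs : s ∈ u) :
    s.Infinite := by
  intro hfin
  obtain ⟨x, -, hx⟩ := Ultrafilter.eq_pure_of_finite_mem hfin hs
  exact hu x hx

lemma map_eq_of_notMem (σ : Equiv.Perm ℕ) (s : Set ℕ) (hσ : ∀ n, n ∉ s → σ n = n)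
    (u : Ultrafilter ℕ) (hu : s ∉ u) : u.map σ = u := by
  have hsc : sᶜ ∈ u := Ultrafilter.compl_mem_iff_notMem.mpr hu
  refine Ultrafilter.coe_le_coe.mp (Filter.le_def.mpr fun t ht => ?_)
  have : σ ⁻¹' t ∈ u := by
    refine Filter.mem_of_superset (Filter.inter_mem ht hsc) ?_
    rintro n ⟨hnt, hns⟩
    simpa [Set.mem_preimage, hσ n hns] using hnt
  exact Ultrafilter.mem_map.mpr this

/-- The extension of a permutation of `ℕ` to `StoneCech ℕ`. -/
noncomputable def ext (σ : Equiv.Perm ℕ) : StoneCech ℕ → StoneCech ℕ :=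
  stoneCechExtend (continuous_of_discreteTopology (f := fun n => stoneCechUnit (σ n)))

lemma ext_cont (σ : Equiv.Perm ℕ) : Continuous (ext σ) := continuous_stoneCechExtend _

lemma ext_unit (σ : Equiv.Perm ℕ) (n : ℕ) : ext σ (stoneCechUnit n) = stoneCechUnit (σ n) :=
  congrFun (stoneCechExtend_extends _) n

lemma ext_ext (σ : Equiv.Perm ℕ) (x : StoneCech ℕ) : ext σ.symm (ext σ x) = x := by
  have h : ext σ.symm ∘ ext σ = id :=
    stoneCech_hom_ext ((ext_cont σ.symm).comp (ext_cont σ)) continuous_id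
      (funext fun n => by simp [Function.comp, ext_unit])
  exact congrFun h x

lemma ext_ext' (σ : Equiv.Perm ℕ) (x : StoneCech ℕ) : ext σ (ext σ.symm x) = x := by
  have := ext_ext σ.symm x
  rwa [Equiv.symm_symm] at this

lemma extend_pure_comp (σ : Equiv.Perm ℕ) (u : Ultrafilter ℕ) :
    Ultrafilter.extend (fun n => (pure (σ n) : Ultrafilter ℕ)) u = u.map σ := by
  rw [ultrafilter_extend_eq_iff]
  have h : (Ultrafilter.map (fun n => (pure (σ n) : Ultrafilter ℕ)) u : Filter (Ultrafilter ℕ))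
      = Filter.map pure ↑(u.map σ) := by
    rw [Ultrafilter.coe_map, Ultrafilter.coe_map,
      show (fun n => (pure (σ n) : Ultrafilter ℕ)) = (pure ∘ ⇑σ : ℕ → Ultrafilter ℕ) from rfl,
      ← Filter.map_map]
  rw [h]
  exact Ultrafilter.tendsto_pure_self (u.map σ)

lemma phi_ext (σ : Equiv.Perm ℕ) (x : StoneCech ℕ) : phi (ext σ x) = (phi x).map σ := by
  have h : phi ∘ ext σ =
      (fun y => Ultrafilter.extend (fun n => (pure (σ n) : Ultrafilter ℕ)) (phi y)) := by
    refine stoneCech_hom_ext (continuous_phi.comp (ext_cont σ))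
      ((continuous_ultrafilter_extend _).comp continuous_phi) (funext fun n => ?_)
    simp only [Function.comp_apply, ext_unit, phi_unit]
    exact (congrFun (ultrafilter_extend_extends (fun n => (pure (σ n) : Ultrafilter ℕ))) n).symm
  have := congrFun h x
  simp only [Function.comp_apply] at this
  rw [this, extend_pure_comp]

lemma exists_perm (s : Set ℕ) (hs : s.Infinite) :
    ∃ σ : Equiv.Perm ℕ, (∀ n, n ∉ s → σ n = n) ∧ (∀ n ∈ s, σ n ∈ s) ∧
      ∃ B : Set ℕ, B ⊆ s ∧ B.Infinite ∧ ∀ n ∈ B, σ n ∉ B := by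
  classical
  haveI : Infinite ↥s := hs.to_subtype
  obtain ⟨d⟩ := nonempty_denumerable ↥s
  let e : ℕ ≃ ↥s := (Denumerable.eqv ↥s).symm
  have hinv : Function.Involutive (fun n : ℕ => if Even n then n + 1 else n - 1) := by
    intro n
    by_cases he : Even n
    · have h1 : ¬ Even (n + 1) := by simp [Nat.even_add_one, he]
      simp only [if_pos he, if_neg h1]
      omega
    · have h0 : n ≠ 0 := by rintro rfl; exact he Even.zero
      have h1 : Even (n - 1) := by
        rcases Nat.even_or_odd n with hh | hh
        · exact absurd hh he
        · obtain ⟨m, rfl⟩ := hh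
          simp [even_two_mul m]
      simp only [if_neg he, if_pos h1]
      omega
  let τ : Equiv.Perm ℕ := hinv.toPerm _
  have hτ : ∀ k, τ (2 * k) = 2 * k + 1 := fun k => by
    show (if Even (2 * k) then 2 * k + 1 else 2 * k - 1) = 2 * k + 1
    rw [if_pos (even_two_mul k)]
  let π : Equiv.Perm ↥s := e.permCongr τ
  let f : ↥s ≃ Subtype (· ∈ s) := Equiv.refl ↥s
  let σ : Equiv.Perm ℕ := π.extendDomain f
  have hval : ∀ (n : ℕ) (h : n ∈ s), σ n = ↑(π ⟨n, h⟩) := by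
    intro n h
    rw [Equiv.Perm.extendDomain_apply_subtype π f h]
    rfl
  refine ⟨σ, fun n hn => Equiv.Perm.extendDomain_apply_not_subtype π f hn, ?_, ?_⟩
  · intro n hn
    rw [hval n hn]
    exact (π ⟨n, hn⟩).2
  · refine ⟨Set.range (fun k => ((e (2 * k) : ↥s) : ℕ)), ?_, ?_, ?_⟩
    · rintro _ ⟨k, rfl⟩
      exact (e (2 * k)).2
    · refine Set.infinite_range_of_injective ?_
      intro a b hab
      have := e.injective (Subtype.coe_injective hab)
      omega
    · rintro _ ⟨k, rfl⟩ ⟨j, hj⟩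
      have hmem : ((e (2 * k) : ↥s) : ℕ) ∈ s := (e (2 * k)).2
      rw [hval _ hmem] at hj
      have hsub : (⟨((e (2 * k) : ↥s) : ℕ), hmem⟩ : ↥s) = e (2 * k) := Subtype.ext rfl
      rw [show π (⟨((e (2 * k) : ↥s) : ℕ), hmem⟩ : ↥s) = e (τ (2 * k)) by
        rw [hsub]; simp [π, Equiv.permCongr_apply]] at hj
      rw [hτ k] at hj
      have := e.injective (Subtype.coe_injective hj)
      omega

/-- A point of the remainder. -/
noncomputable def x0 : OmegaStar :=
  ⟨psi (Ultrafilter.of Filter.cofinite),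
    psi_not_unit (free_of_le_cofinite _ (Ultrafilter.of_le _))⟩

end CrowdedAux
namespace CrowdedAux

open Filter Set

lemma key (W : Set OmegaStar) (hW : IsOpen W) (x₀ : OmegaStar) (hx₀ : x₀ ∈ W) :
    ∃ (A : Set OmegaStar) (h : OmegaStar ≃ₜ OmegaStar) (x : OmegaStar),
      A ⊆ W ∧ (∀ y, y ∉ A → h y = y) ∧ (∀ y ∈ A, h y ∈ A) ∧ h x ≠ x := by
  obtain ⟨W1, hW1, hpre⟩ := isOpen_induced_iff.mp hW
  have hx1 : (x₀ : StoneCech ℕ) ∈ W1 := by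
    rw [← hpre] at hx₀; exact hx₀
  have hpW2 : phi x₀.1 ∈ psi ⁻¹' W1 := by
    show psi (phi x₀.1) ∈ W1
    rw [psi_phi]; exact hx1
  have hW2 : IsOpen (psi ⁻¹' W1) := hW1.preimage continuous_psi
  obtain ⟨v, hv, hpv, hvW2⟩ := ultrafilterBasis_is_basis.exists_subset_of_mem_open hpW2 hW2
  obtain ⟨s, rfl⟩ := hv
  have hpv' : s ∈ phi x₀.1 := hpv
  have hfree : ∀ n, phi x₀.1 ≠ pure n := phi_free x₀.2
  have hsinf : s.Infinite := infinite_mem hfree hpv'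
  obtain ⟨σ, hσout, hσin, B, hBs, hBinf, hσB⟩ := exists_perm s hsinf
  have hFrem : ∀ z : StoneCech ℕ, z ∉ Set.range stoneCechUnit →
      ext σ z ∉ Set.range (stoneCechUnit : ℕ → StoneCech ℕ) := by
    intro z hz
    rintro ⟨n, hn⟩
    exact hz ⟨σ.symm n, by rw [← ext_ext σ z, ← hn, ext_unit]⟩
  have hFrem' : ∀ z : StoneCech ℕ, z ∉ Set.range stoneCechUnit →
      ext σ.symm z ∉ Set.range (stoneCechUnit : ℕ → StoneCech ℕ) := by
    intro z hz
    rintro ⟨n, hn⟩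
    exact hz ⟨σ n, by rw [← ext_ext' σ z, ← hn, ext_unit]⟩
  let h : OmegaStar ≃ₜ OmegaStar :=
    { toFun := fun x => ⟨ext σ x.1, hFrem x.1 x.2⟩
      invFun := fun x => ⟨ext σ.symm x.1, hFrem' x.1 x.2⟩
      left_inv := fun x => Subtype.ext (ext_ext σ x.1)
      right_inv := fun x => Subtype.ext (ext_ext' σ x.1)
      continuous_toFun := ((ext_cont σ).comp continuous_subtype_val).subtype_mk _
      continuous_invFun := ((ext_cont σ.symm).comp continuous_subtype_val).subtype_mk _ }
  haveI : (Filter.cofinite ⊓ Filter.principal B).NeBot := hBinf.cofinite_inf_principal_neBot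
  set q : Ultrafilter ℕ := Ultrafilter.of (Filter.cofinite ⊓ Filter.principal B) with hq
  have hBq : B ∈ q :=
    Filter.le_def.mp (Ultrafilter.of_le _) _ (Filter.mem_inf_of_right (Filter.mem_principal_self B))
  have hqfree : ∀ n, q ≠ pure n :=
    free_of_le_cofinite q ((Ultrafilter.of_le _).trans inf_le_left)
  refine ⟨{x : OmegaStar | s ∈ phi x.1}, h, ⟨psi q, psi_not_unit hqfree⟩, ?_, ?_, ?_, ?_⟩
  · intro y hy
    rw [← hpre]
    show y.1 ∈ W1
    have h1 : phi y.1 ∈ psi ⁻¹' W1 := hvW2 hy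
    have h2 : psi (phi y.1) ∈ W1 := h1
    rwa [psi_phi] at h2
  · intro y hy
    apply Subtype.ext
    show ext σ y.1 = y.1
    apply phi_injective
    rw [phi_ext]
    exact map_eq_of_notMem σ s hσout (phi y.1) hy
  · intro y hy
    show s ∈ phi (ext σ y.1)
    rw [phi_ext]
    refine Ultrafilter.mem_map.mpr (Filter.mem_of_superset hy ?_)
    intro n hn
    exact hσin n hn
  · intro heq
    have h1 : ext σ (psi q) = psi q := congrArg Subtype.val heq
    have h2 : q.map σ = q := by
      have := congrArg phi h1
      rwa [phi_ext, phi_psi] at this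
    have h3 : σ ⁻¹' B ∈ q := Ultrafilter.mem_map.mp (h2.symm ▸ hBq)
    have h4 : B ∩ σ ⁻¹' B ∈ q := Filter.inter_mem hBq h3
    have h5 : B ∩ σ ⁻¹' B = ∅ :=
      Set.eq_empty_iff_forall_notMem.mpr fun n hn => hσB n hn.1 hn.2
    rw [h5] at h4
    exact Ultrafilter.empty_notMem h4

end CrowdedAux
/-- `H(ω*)` is crowded: it has no isolated points. -/
theorem homeoOmegaStar_crowded :
    ∀ f : OmegaStar ≃ₜ OmegaStar, ¬ IsOpen ({f} : Set (OmegaStar ≃ₜ OmegaStar)) := by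
  intro f hopen
  have hopen' : IsOpen[TopologicalSpace.induced
      (fun h : OmegaStar ≃ₜ OmegaStar => (h : C(OmegaStar, OmegaStar)))
      ContinuousMap.compactOpen] {f} := hopen
  obtain ⟨O, hO, hpreO⟩ := isOpen_induced_iff.mp hopen'
  have hfO : (f : C(OmegaStar, OmegaStar)) ∈ O := by
    have h1 : f ∈ ({f} : Set (OmegaStar ≃ₜ OmegaStar)) := rfl
    rw [← hpreO] at h1
    exact h1
  obtain ⟨t, ht, hft, htO⟩ :=
    (TopologicalSpace.isTopologicalBasis_of_subbasis
      (ContinuousMap.compactOpen_eq (X := OmegaStar) (Y := OmegaStar))).exists_subset_of_mem_open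
      hfO hO
  obtain ⟨S, ⟨hSfin, hSsub⟩, rfl⟩ := ht
  have hchoice : ∀ m : S, ∃ K U : Set OmegaStar, IsCompact K ∧ IsOpen U ∧
      (m : Set C(OmegaStar, OmegaStar)) = {g : C(OmegaStar, OmegaStar) | Set.MapsTo g K U} := by
    intro m
    obtain ⟨K, hK, U, hU, hm⟩ := Set.mem_image2.mp (hSsub m.2)
    exact ⟨K, U, hK, hU, hm.symm⟩
  choose K U hKc hUo hm using hchoice
  haveI : Finite ↥S := hSfin.to_subtype
  classical
  set x₀ : OmegaStar := CrowdedAux.x0 with hx0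
  set W : Set OmegaStar := ⋂ m : S, (if x₀ ∈ K m then f ⁻¹' (U m) else (K m)ᶜ) with hWdef
  have hmapsf : ∀ m : S, Set.MapsTo f (K m) (U m) := by
    intro m
    have h1 : (f : C(OmegaStar, OmegaStar)) ∈ (m : Set C(OmegaStar, OmegaStar)) :=
      Set.mem_sInter.mp hft m m.2
    rw [hm m] at h1
    exact h1
  have hWopen : IsOpen W := by
    refine isOpen_iInter_of_finite fun m => ?_
    by_cases hx : x₀ ∈ K m
    · rw [if_pos hx]; exact (hUo m).preimage f.continuous
    · rw [if_neg hx]; exact (hKc m).isClosed.isOpen_compl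
  have hx₀W : x₀ ∈ W := by
    refine Set.mem_iInter.mpr fun m => ?_
    by_cases hx : x₀ ∈ K m
    · rw [if_pos hx]; exact hmapsf m hx
    · rw [if_neg hx]; exact hx
  obtain ⟨A, h, x, hAW, hid, hmapsA, hxne⟩ := CrowdedAux.key W hWopen x₀ hx₀W
  set g : OmegaStar ≃ₜ OmegaStar := h.trans f with hg
  have hgt : (g : C(OmegaStar, OmegaStar)) ∈ ⋂₀ S := by
    refine Set.mem_sInter.mpr fun m hmS => ?_
    rw [show m = {g : C(OmegaStar, OmegaStar) |
      Set.MapsTo g (K ⟨m, hmS⟩) (U ⟨m, hmS⟩)} from hm ⟨m, hmS⟩]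
    intro y hy
    by_cases hyA : y ∈ A
    · have hxK : x₀ ∈ K ⟨m, hmS⟩ := by
        by_contra hxK
        have hy' := Set.mem_iInter.mp (hAW hyA) ⟨m, hmS⟩
        rw [if_neg hxK] at hy'
        exact hy' hy
      have hhy := Set.mem_iInter.mp (hAW (hmapsA y hyA)) ⟨m, hmS⟩
      rw [if_pos hxK] at hhy
      exact hhy
    · have heq : h y = y := hid y hyA
      show f (h y) ∈ U ⟨m, hmS⟩
      rw [heq]
      exact hmapsf ⟨m, hmS⟩ hy
  have hgO : (g : C(OmegaStar, OmegaStar)) ∈ O := htO hgt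
  have hgf : g = f := by
    have h1 : g ∈ (fun h : OmegaStar ≃ₜ OmegaStar =>
        (h : C(OmegaStar, OmegaStar))) ⁻¹' O := hgO
    rw [hpreO] at h1
    exact h1
  have h2 : f (h x) = f x := by
    have := congrArg (fun e : OmegaStar ≃ₜ OmegaStar => e x) hgf
    exact this
  exact hxne (f.injective h2)
end

section
/- Let X be a compact Hausdorff zero-dimensional space without isolated points such that disjoint open Fσ-subsets of X have disjoint closures, and such that every nonempty Gδ-subset of X has nonempty interior. Then every countable subset of H(X), the group of self-homeomorphisms of X with the compact-open topology, is discrete (and hence closed and discrete) in H(X). -/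
open Set Topology TopologicalSpace

section Helpers

variable {X : Type*} [TopologicalSpace X]

/-- The closure of a countable set has empty interior. -/
lemma aux_countable_closure_interior [CompactSpace X] [T2Space X]
    (hcrowded : ∀ x : X, ¬ IsOpen ({x} : Set X))
    (hGδ : ∀ s : Set X, IsGδ s → s.Nonempty → (interior s).Nonempty)
    {Z : Set X} (hZ : Z.Countable) : interior (closure Z) = ∅ := by
  by_contra h
  obtain ⟨x, hx⟩ := nonempty_iff_ne_empty.mpr h
  have hO : IsOpen (interior (closure Z)) := isOpen_interior
  have hdense : Dense (⋂ z ∈ Z, ({z}ᶜ : Set X)) := by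
    refine dense_biInter_of_isOpen (fun z _ => isOpen_compl_singleton) hZ (fun z _ => ?_)
    rw [dense_compl_singleton_iff_not_open]
    exact hcrowded z
  obtain ⟨y, hy1, hy2⟩ := hdense.exists_mem_open hO ⟨x, hx⟩
  set s : Set X := interior (closure Z) ∩ ⋂ z ∈ Z, ({z}ᶜ : Set X) with hs
  have hGs : IsGδ s :=
    hO.isGδ.inter (IsGδ.biInter hZ fun z _ => isOpen_compl_singleton.isGδ)
  obtain ⟨w, hw⟩ := hGδ s hGs ⟨y, hy2, hy1⟩
  have hsub : interior s ⊆ closure Z :=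
    interior_subset.trans (inter_subset_left.trans interior_subset)
  obtain ⟨u, hu1, hu2⟩ := mem_closure_iff.mp (hsub hw) (interior s) isOpen_interior hw
  have : u ∈ ⋂ z ∈ Z, ({z}ᶜ : Set X) := (interior_subset hu1).2
  simp only [mem_iInter, mem_compl_iff, mem_singleton_iff] at this
  exact this u hu2 rfl

lemma aux_interior_union_empty {F G : Set X} (hF : IsClosed F)
    (hFi : interior F = ∅) (hGi : interior G = ∅) : interior (F ∪ G) = ∅ := by
  by_contra h
  obtain ⟨x, hx⟩ := nonempty_iff_ne_empty.mpr h
  have h1 : IsOpen (interior (F ∪ G) \ F) := isOpen_interior.sdiff hF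
  rcases (interior (F ∪ G) \ F).eq_empty_or_nonempty with he | ⟨y, hy⟩
  · have : interior (F ∪ G) ⊆ F := by
      intro a ha
      by_contra haF
      exact (eq_empty_iff_forall_notMem.mp he a) ⟨ha, haF⟩
    have : interior (F ∪ G) ⊆ interior F := isOpen_interior.subset_interior_iff.mpr this
    rw [hFi] at this
    exact this hx
  · have : interior (F ∪ G) \ F ⊆ G := fun a ha =>
      (interior_subset ha.1).resolve_left ha.2
    have : interior (F ∪ G) \ F ⊆ interior G := h1.subset_interior_iff.mpr this
    rw [hGi] at this
    exact this hy

/-- In a compact space with a clopen basis, disjoint closed sets can be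
separated by a clopen set. -/
lemma aux_clopen_sep [CompactSpace X]
    (hzd : TopologicalSpace.IsTopologicalBasis {s : Set X | IsClopen s})
    {S T : Set X} (hS : IsClosed S) (hT : IsClosed T) (hST : Disjoint S T) :
    ∃ C : Set X, IsClopen C ∧ S ⊆ C ∧ Disjoint C T := by
  have hex : ∀ x : S, ∃ B : Set X, IsClopen B ∧ (x : X) ∈ B ∧ B ⊆ Tᶜ := by
    rintro ⟨x, hx⟩
    obtain ⟨B, hB, hxB, hBsub⟩ := hzd.exists_subset_of_mem_open
      (show x ∈ Tᶜ from Set.disjoint_left.mp hST hx) hT.isOpen_compl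
    exact ⟨B, hB, hxB, hBsub⟩
  choose B hB hxB hBT using hex
  obtain ⟨t, ht⟩ := hS.isCompact.elim_finite_subcover B (fun x => (hB x).isOpen)
    (fun x hx => mem_iUnion.mpr ⟨⟨x, hx⟩, hxB _⟩)
  refine ⟨⋃ x ∈ t, B x, isClopen_biUnion_finset (fun x _ => hB x), ht, ?_⟩
  rw [← Set.subset_compl_iff_disjoint_right]
  exact Set.iUnion₂_subset fun x _ => hBT x

end Helpers

section Main

variable {X : Type*} [TopologicalSpace X] [CompactSpace X] [T2Space X]

/-- The key combinatorial lemma: given countably many homeomorphisms of `X`, each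
moving at least one point, there is a clopen set not invariant under any of them,
in the strong sense that some point of `C` is moved out of `C`. -/
lemma aux_clopen_moves
    (hzd : TopologicalSpace.IsTopologicalBasis {s : Set X | IsClopen s})
    (hcrowded : ∀ x : X, ¬ IsOpen ({x} : Set X))
    (hFspace : IsFSpace X)
    (hGδ : ∀ s : Set X, IsGδ s → s.Nonempty → (interior s).Nonempty)
    (k : ℕ → X ≃ₜ X) (hk : ∀ n, ∃ x, k n x ≠ x) :
    ∃ C : Set X, IsClopen C ∧ ∀ n, ∃ x ∈ C, k n x ∉ C := by
  choose z hz using hk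
  set Z : Set X := range z ∪ range (fun n => k n (z n)) with hZdef
  have hZc : Z.Countable := (countable_range _).union (countable_range _)
  set F : Set X := closure Z with hFdef
  have hFcl : IsClosed F := isClosed_closure
  have hFint : interior F = ∅ := aux_countable_closure_interior hcrowded hGδ hZc
  -- the inductive step
  have key : ∀ (n : ℕ) (L : Set X), ∃ P Q : Set X,
      IsClopen L → Disjoint L F →
        (IsClopen P ∧ IsClopen Q ∧ Disjoint P Q ∧ Disjoint P L ∧ Disjoint Q L ∧
          Disjoint P F ∧ Disjoint Q F ∧ ∃ x, x ∈ P ∧ k n x ∈ Q) := by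
    intro n L
    by_cases hLh : IsClopen L ∧ Disjoint L F
    · obtain ⟨hL, hLF⟩ := hLh
      have hzZ : z n ∈ Z := Or.inl (mem_range_self n)
      have hkzZ : k n (z n) ∈ Z := Or.inr ⟨n, rfl⟩
      have hzF : z n ∈ F := subset_closure hzZ
      have hkzF : k n (z n) ∈ F := subset_closure hkzZ
      have hzL : z n ∉ L := Set.disjoint_right.mp hLF hzF
      have hkzL : k n (z n) ∉ L := Set.disjoint_right.mp hLF hkzF
      set O : Set X := {x | k n x ≠ x} ∩ (Lᶜ ∩ (⇑(k n)) ⁻¹' Lᶜ) with hOdef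
      have hOopen : IsOpen O := by
        refine (isOpen_ne_fun (k n).continuous continuous_id).inter
          (hL.compl.isOpen.inter (hL.compl.isOpen.preimage (k n).continuous))
      have hzO : z n ∈ O := ⟨hz n, hzL, hkzL⟩
      set F' : Set X := F ∪ (⇑(k n)) ⁻¹' F with hF'def
      have hF'cl : IsClosed F' := hFcl.union (hFcl.preimage (k n).continuous)
      have hF'int : interior F' = ∅ := by
        refine aux_interior_union_empty hFcl hFint ?_
        rw [← Homeomorph.preimage_interior, hFint, Set.preimage_empty]
      have hnotsub : ¬ O ⊆ F' := by
        intro hsub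
        have h2 : O ⊆ interior F' := hOopen.subset_interior_iff.mpr hsub
        rw [hF'int] at h2
        exact h2 hzO
      obtain ⟨x, hxO, hxF'⟩ := Set.not_subset.mp hnotsub
      have hxW : k n x ≠ x := hxO.1
      have hxL : x ∉ L := hxO.2.1
      have hkxL : k n x ∉ L := hxO.2.2
      have hxF : x ∉ F := fun h => hxF' (Or.inl h)
      have hkxF : k n x ∉ F := fun h => hxF' (Or.inr h)
      have hopen1 : IsOpen (((L ∪ F) ∪ {k n x})ᶜ) :=
        ((hL.isClosed.union hFcl).union isClosed_singleton).isOpen_compl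
      have hx1 : x ∈ ((L ∪ F) ∪ {k n x})ᶜ := by
        intro h
        rcases h with h | h
        · rcases h with h | h
          · exact hxL h
          · exact hxF h
        · exact hxW (mem_singleton_iff.mp h).symm
      obtain ⟨P, hP, hxP, hPsub⟩ := hzd.exists_subset_of_mem_open hx1 hopen1
      have hopen2 : IsOpen (((L ∪ F) ∪ P)ᶜ) :=
        ((hL.isClosed.union hFcl).union hP.isClosed).isOpen_compl
      have hx2 : k n x ∈ ((L ∪ F) ∪ P)ᶜ := by
        intro h
        rcases h with h | h
        · rcases h with h | h
          · exact hkxL h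
          · exact hkxF h
        · exact (hPsub h) (Or.inr rfl)
      obtain ⟨Q, hQ, hkxQ, hQsub⟩ := hzd.exists_subset_of_mem_open hx2 hopen2
      have hPc : P ⊆ (L ∪ F)ᶜ := fun a ha h => hPsub ha (Or.inl h)
      have hQc : Q ⊆ (L ∪ F)ᶜ := fun a ha h => hQsub ha (Or.inl h)
      refine ⟨P, Q, fun _ _ => ⟨hP, hQ, ?_, ?_, ?_, ?_, ?_, x, hxP, hkxQ⟩⟩
      · exact (Set.subset_compl_iff_disjoint_right.mp
          (fun a ha h => hQsub ha (Or.inr h))).symm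
      · exact Set.subset_compl_iff_disjoint_right.mp
          (fun a ha h => hPc ha (Or.inl h))
      · exact Set.subset_compl_iff_disjoint_right.mp
          (fun a ha h => hQc ha (Or.inl h))
      · exact Set.subset_compl_iff_disjoint_right.mp
          (fun a ha h => hPc ha (Or.inr h))
      · exact Set.subset_compl_iff_disjoint_right.mp
          (fun a ha h => hQc ha (Or.inr h))
    · exact ⟨∅, ∅, fun h1 h2 => absurd ⟨h1, h2⟩ hLh⟩
  choose P Q hPQ using key
  -- build the recursion
  set St : ℕ → Set X := fun n => Nat.rec (∅ : Set X)
    (fun m L => (L ∪ P m L) ∪ Q m L) n with hStdef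
  have hStS : ∀ n, St (n + 1) = (St n ∪ P n (St n)) ∪ Q n (St n) := fun n => rfl
  have hInv : ∀ n, IsClopen (St n) ∧ Disjoint (St n) F := by
    intro n
    induction n with
    | zero =>
      refine ⟨isClopen_empty, ?_⟩
      rw [show St 0 = (∅ : Set X) from rfl]
      exact disjoint_bot_left
    | succ m ih =>
      obtain ⟨h1, h2, _h3, _h4, _h5, h6, h7, _h8⟩ := hPQ m (St m) ih.1 ih.2
      rw [hStS]
      refine ⟨(ih.1.union h1).union h2, ?_⟩
      rw [Set.disjoint_union_left, Set.disjoint_union_left]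
      exact ⟨⟨ih.2, h6⟩, h7⟩
  set Pn : ℕ → Set X := fun n => P n (St n) with hPndef
  set Qn : ℕ → Set X := fun n => Q n (St n) with hQndef
  have props : ∀ n, IsClopen (Pn n) ∧ IsClopen (Qn n) ∧ Disjoint (Pn n) (Qn n) ∧
      Disjoint (Pn n) (St n) ∧ Disjoint (Qn n) (St n) ∧
      Disjoint (Pn n) F ∧ Disjoint (Qn n) F ∧ ∃ x, x ∈ Pn n ∧ k n x ∈ Qn n :=
    fun n => hPQ n (St n) (hInv n).1 (hInv n).2
  have hmono : Monotone St := by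
    refine monotone_nat_of_le_succ fun n => ?_
    rw [hStS]
    exact subset_union_left.trans' subset_union_left
  have hPst : ∀ n, Pn n ⊆ St (n + 1) := by
    intro n; rw [hStS]; exact subset_union_right.trans subset_union_left
  have hQst : ∀ n, Qn n ⊆ St (n + 1) := fun n => by rw [hStS]; exact subset_union_right
  have hdisj : ∀ m n, Disjoint (Pn m) (Qn n) := by
    intro m n
    rcases lt_trichotomy m n with h | h | h
    · exact (((props n).2.2.2.2.1).mono_right ((hPst m).trans (hmono h))).symm
    · subst h; exact (props m).2.2.1
    · exact ((props m).2.2.2.1).mono_right ((hQst n).trans (hmono h))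
  set U : Set X := ⋃ n, Pn n with hUdef
  set V : Set X := ⋃ n, Qn n with hVdef
  have hUV : Disjoint U V :=
    Set.disjoint_iUnion_left.mpr fun m => Set.disjoint_iUnion_right.mpr fun n => hdisj m n
  have hUo : IsOpen U := isOpen_iUnion fun n => (props n).1.isOpen
  have hVo : IsOpen V := isOpen_iUnion fun n => (props n).2.1.isOpen
  have hUf : IsFsigma U := ⟨Pn, fun n => (props n).1.isClosed, rfl⟩
  have hVf : IsFsigma V := ⟨Qn, fun n => (props n).2.1.isClosed, rfl⟩
  have hclos : Disjoint (closure U) (closure V) := hFspace U V hUo hVo hUf hVf hUV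
  obtain ⟨C, hC, hUC, hCV⟩ := aux_clopen_sep hzd isClosed_closure isClosed_closure hclos
  refine ⟨C, hC, fun n => ?_⟩
  obtain ⟨x, hxP, hkx⟩ := (props n).2.2.2.2.2.2.2
  refine ⟨x, hUC (subset_closure (mem_iUnion.mpr ⟨n, hxP⟩)), fun hxC => ?_⟩
  exact (Set.disjoint_left.mp hCV hxC) (subset_closure (mem_iUnion.mpr ⟨n, hkx⟩))

end Main

/-- If `X` is a crowded compact zero-dimensional Hausdorff F-space in
which every nonempty Gδ-set has nonempty interior, then every countable subset of
`H(X)` (with the compact-open topology) is discrete, and hence closed and discrete. -/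
theorem countable_subsets_discrete (X : Type*) [TopologicalSpace X]
    [CompactSpace X] [T2Space X]
    (hzd : TopologicalSpace.IsTopologicalBasis {s : Set X | IsClopen s})
    (hcrowded : ∀ x : X, ¬ IsOpen ({x} : Set X))
    (hFspace : IsFSpace X)
    (hGδ : ∀ s : Set X, IsGδ s → s.Nonempty → (interior s).Nonempty)
    (A : Set (X ≃ₜ X)) (hA : A.Countable) :
    IsClosed A ∧ ∀ f ∈ A, ∃ U : Set (X ≃ₜ X), IsOpen U ∧ U ∩ A = {f} := by
  have main : ∀ (f : X ≃ₜ X) (B : Set (X ≃ₜ X)), B.Countable → f ∉ B →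
      ∃ N : Set (X ≃ₜ X), IsOpen N ∧ f ∈ N ∧ N ∩ B = ∅ := by
    intro f B hBc hfB
    rcases B.eq_empty_or_nonempty with rfl | hne
    · exact ⟨univ, isOpen_univ, mem_univ f, by simp⟩
    obtain ⟨e, rfl⟩ := hBc.exists_eq_range hne
    set k : ℕ → X ≃ₜ X := fun n => (e n).trans f.symm with hkdef
    have hk : ∀ n, ∃ x, k n x ≠ x := by
      intro n
      by_contra h
      push_neg at h
      apply hfB
      refine ⟨n, ?_⟩
      refine Homeomorph.ext fun x => ?_
      have hx := h x
      simp only [hkdef, Homeomorph.trans_apply] at hx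
      calc e n x = f (f.symm (e n x)) := (f.apply_symm_apply _).symm
        _ = f x := by rw [hx]
    obtain ⟨C, hC, hmoves⟩ := aux_clopen_moves hzd hcrowded hFspace hGδ k hk
    set N : Set (X ≃ₜ X) :=
      (fun h : X ≃ₜ X => (h : C(X, X))) ⁻¹' {φ : C(X, X) | Set.MapsTo φ C (⇑f '' C)}
      with hNdef
    have hNo : IsOpen N := by
      refine continuous_induced_dom.isOpen_preimage _ ?_
      exact ContinuousMap.isOpen_setOf_mapsTo hC.isClosed.isCompact
        (f.isOpen_image.mpr hC.isOpen)
    have hfN : f ∈ N := fun x hx => ⟨x, hx, rfl⟩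
    refine ⟨N, hNo, hfN, ?_⟩
    rw [Set.eq_empty_iff_forall_notMem]
    rintro g ⟨hgN, n, rfl⟩
    obtain ⟨x, hxC, hkx⟩ := hmoves n
    have hgx : e n x ∈ ⇑f '' C := hgN hxC
    obtain ⟨y, hyC, hy⟩ := hgx
    apply hkx
    have hky : k n x = y := by
      simp only [hkdef, Homeomorph.trans_apply]
      rw [← hy]
      exact f.symm_apply_apply y
    rw [hky]
    exact hyC
  constructor
  · rw [← isOpen_compl_iff, isOpen_iff_forall_mem_open]
    intro f hf
    obtain ⟨N, hNo, hfN, hNB⟩ := main f A hA hf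
    refine ⟨N, fun g hg hgA => ?_, hNo, hfN⟩
    exact (Set.eq_empty_iff_forall_notMem.mp hNB g) ⟨hg, hgA⟩
  · intro f hf
    obtain ⟨N, hNo, hfN, hNB⟩ := main f (A \ {f}) (hA.mono diff_subset)
      (fun h => h.2 rfl)
    refine ⟨N, hNo, ?_⟩
    ext g
    simp only [mem_inter_iff, mem_singleton_iff]
    constructor
    · rintro ⟨hgN, hgA⟩
      by_contra hgf
      exact (Set.eq_empty_iff_forall_notMem.mp hNB g) ⟨hgN, hgA, hgf⟩
    · rintro rfl
      exact ⟨hfN, hf⟩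
end

section
/- Every countable subset of H(ω*), the group of self-homeomorphisms of ω* = βω \ ω with the compact-open topology, is closed and discrete in H(ω*). -/
open Set Topology TopologicalSpace

/-!
Let `f ∉ {g₀, g₁, …}`. We choose nonempty clopen sets `Vₖ` with `f[Vₖ] ∩ gₗ[Vₗ] = ∅` for all
`k, l`, recursively: at stage `n` pick `x` with `f x ≠ gₙ x`, shrink the earlier sets so that
they stay away from `f x` and `gₙ x` (possible since `ω*` has no isolated points), and add a
small clopen neighbourhood of `x`. Each `Vₖ` is shrunk infinitely often, but nonempty Gδ-sets of
`ω*` have nonempty interior, so a nonempty clopen set survives all shrinkings. Since `ω*` is an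
F-space, `⋃ f[Vₖ]` and `⋃ gₗ[Vₗ]` are separated by a clopen set `K`, and then
`{h | h[f⁻¹ K] ⊆ K}` is a neighbourhood of `f` containing no `gₙ`. Hence countable subsets of
`H(ω*)` are closed, and therefore also discrete.

Both properties of `ω*` come from describing its clopen sets as `A*` for `A ⊆ ℕ`, where
`A* ∩ B* = (A ∩ B)*` and `A* = ∅` iff `A` is finite: they reduce to the existence of infinite
pseudo-intersections and of almost-separating sets in `ℕ`.
-/

open Filter

theorem Set.Infinite.exists_disjoint_infinite_subsets {α : Type*} {s : Set α} (hs : s.Infinite) :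
    ∃ t u, t ⊆ s ∧ u ⊆ s ∧ Disjoint t u ∧ t.Infinite ∧ u.Infinite := by
  obtain ⟨t, u, rfl, htu, hcard⟩ := hs.exists_union_disjoint_cardinal_eq_of_infinite
  have hiff : t.Infinite ↔ u.Infinite := by
    simp only [← Set.infinite_coe_iff, Cardinal.infinite_iff, hcard]
  have htu_inf : t.Infinite ∨ u.Infinite := Set.infinite_union.1 hs
  exact ⟨t, u, subset_union_left, subset_union_right, htu,
    htu_inf.elim id hiff.2, htu_inf.elim hiff.1 id⟩

theorem Nat.exists_infinite_diff_finite_of_biInter_infinite {S : ℕ → Set ℕ}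
    (hS : ∀ n, (⋂ k ≤ n, S k).Infinite) :
    ∃ R : Set ℕ, R.Infinite ∧ ∀ n, (R \ S n).Finite := by
  obtain ⟨φ, hφ, hφS⟩ := extraction_forall_of_frequently (P := fun n m => m ∈ ⋂ k ≤ n, S k)
    fun n => Nat.frequently_atTop_iff_infinite.2 (hS n)
  refine ⟨range φ, infinite_range_of_injective hφ.injective, fun n =>
    ((finite_Iio n).image φ).subset ?_⟩
  rintro _ ⟨⟨m, rfl⟩, hm⟩
  refine ⟨m, mem_Iio.2 ?_, rfl⟩
  by_contra! hnm
  exact hm (mem_iInter₂.1 (hφS m) n hnm)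

theorem exists_almost_separating {α : Type*} (A B : ℕ → Set α)
    (hAB : ∀ k l, (A k ∩ B l).Finite) :
    ∃ C, (∀ k, (A k \ C).Finite) ∧ ∀ l, (C ∩ B l).Finite := by
  refine ⟨⋃ k, (A k \ ⋃ l ≤ k, B l), fun k => ?_, fun l => ?_⟩
  · refine ((finite_Iic k).biUnion fun l _ => hAB k l).subset ?_
    rintro x ⟨hxA, hxC⟩
    have hxB : x ∈ ⋃ l ≤ k, B l := by
      by_contra hxB
      exact hxC (mem_iUnion.2 ⟨k, hxA, hxB⟩)
    obtain ⟨l, hl, hxl⟩ := mem_iUnion₂.1 hxB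
    exact mem_iUnion₂.2 ⟨l, hl, hxA, hxl⟩
  · refine ((finite_Iio l).biUnion fun k _ => hAB k l).subset ?_
    rintro x ⟨hxC, hxB⟩
    obtain ⟨k, hxA, hxB'⟩ := mem_iUnion.1 hxC
    have hkl : k < l := by
      by_contra! hlk
      exact hxB' (mem_iUnion₂.2 ⟨l, hlk, hxB⟩)
    exact mem_iUnion₂.2 ⟨k, hkl, hxA, hxB⟩

def IsAlmostPSpace (X : Type*) [TopologicalSpace X] : Prop :=
  ∀ s : Set X, IsGδ s → s.Nonempty → (interior s).Nonempty

theorem exists_isClopen_nbhd_separating {X Y : Type*} [TopologicalSpace X] [TopologicalSpace Y]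
    [CompactSpace Y] [T2Space Y] [TotallyDisconnectedSpace Y] {f g : X → Y}
    (hf : Continuous f) (hg : Continuous g) {x : X} (hx : f x ≠ g x) {M N : Set Y}
    (hM : IsClosed M) (hN : IsClosed N) (hxM : f x ∉ M) (hxN : g x ∉ N) :
    ∃ W, IsClopen W ∧ x ∈ W ∧ Disjoint (f '' W) (g '' W) ∧ Disjoint (f '' W) M ∧
      Disjoint (g '' W) N := by
  obtain ⟨P, hP, hfxP, hPMg⟩ := compact_exists_isClopen_in_isOpen
    (hM.union isClosed_singleton).isOpen_compl (show f x ∉ M ∪ {g x} by simp [hxM, hx])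
  obtain ⟨Q, hQ, hgxQ, hQNP⟩ := compact_exists_isClopen_in_isOpen
    (hN.union hP.isClosed).isOpen_compl
    (show g x ∉ N ∪ P from fun h => h.elim hxN fun hP' => hPMg hP' (Or.inr rfl))
  have hfW : f '' (f ⁻¹' P ∩ g ⁻¹' Q) ⊆ P := image_subset_iff.2 fun _ h => h.1
  have hgW : g '' (f ⁻¹' P ∩ g ⁻¹' Q) ⊆ Q := image_subset_iff.2 fun _ h => h.2
  refine ⟨f ⁻¹' P ∩ g ⁻¹' Q, (hP.preimage hf).inter (hQ.preimage hg), ⟨hfxP, hgxQ⟩, ?_, ?_, ?_⟩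
  · exact (disjoint_compl_right.mono_right (hQNP.trans (compl_subset_compl.2 subset_union_right))
      ).mono hfW hgW
  · exact (disjoint_compl_left.mono_left (hPMg.trans (compl_subset_compl.2 subset_union_left))
      ).mono_left hfW
  · exact (disjoint_compl_left.mono_left (hQNP.trans (compl_subset_compl.2 subset_union_left))
      ).mono_left hgW

section ZeroDimensional

variable {X : Type*} [TopologicalSpace X] [CompactSpace X] [T2Space X] [TotallyDisconnectedSpace X]

theorem IsClopen.exists_isClopen_subset_notMem [PerfectSpace X] {C : Set X} (hC : IsClopen C)
    (hne : C.Nonempty) (q : X) : ∃ D, IsClopen D ∧ D.Nonempty ∧ D ⊆ C ∧ q ∉ D := by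
  obtain ⟨p, hpC, hpq⟩ : ∃ p ∈ C, p ≠ q := by
    by_cases hq : q ∈ C
    · obtain ⟨p, hpq, hpC⟩ :=
        Filter.nonempty_of_mem (inter_mem_nhdsWithin {q}ᶜ (hC.isOpen.mem_nhds hq))
      exact ⟨p, hpC, hpq⟩
    · obtain ⟨p, hp⟩ := hne
      exact ⟨p, hp, ne_of_mem_of_not_mem hp hq⟩
  obtain ⟨D, hD, hpD, hDC⟩ :=
    compact_exists_isClopen_in_isOpen (hC.isOpen.inter isOpen_compl_singleton) ⟨hpC, hpq⟩
  exact ⟨D, hD, ⟨p, hpD⟩, fun x hx => (hDC hx).1, fun hq => (hDC hq).2 rfl⟩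

theorem IsFSpace.exists_isClopen_separating (hX : IsFSpace X) {U V : ℕ → Set X}
    (hU : ∀ k, IsClopen (U k)) (hV : ∀ l, IsClopen (V l)) (hUV : ∀ k l, Disjoint (U k) (V l)) :
    ∃ K, IsClopen K ∧ (∀ k, U k ⊆ K) ∧ ∀ l, Disjoint K (V l) := by
  have hd := hX (⋃ k, U k) (⋃ l, V l) (isOpen_iUnion fun k => (hU k).isOpen)
    (isOpen_iUnion fun l => (hV l).isOpen) ⟨U, fun k => (hU k).isClosed, rfl⟩
    ⟨V, fun l => (hV l).isClosed, rfl⟩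
    (disjoint_iUnion_left.2 fun k => disjoint_iUnion_right.2 (hUV k))
  obtain ⟨K, hK, hUK, hKV⟩ := exists_clopen_of_closed_subset_open isClosed_closure
    isClosed_closure.isOpen_compl (subset_compl_iff_disjoint_right.2 hd)
  exact ⟨K, hK, fun k => (subset_iUnion U k).trans (subset_closure.trans hUK),
    fun l => disjoint_compl_left.mono hKV ((subset_iUnion V l).trans subset_closure)⟩

theorem IsAlmostPSpace.exists_isClopen_subset_iInter (hX : IsAlmostPSpace X) {C : ℕ → Set X}
    (hC : ∀ n, IsClopen (C n)) (hne : ∀ n, (C n).Nonempty) (hanti : Antitone C) :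
    ∃ D, IsClopen D ∧ D.Nonempty ∧ ∀ n, D ⊆ C n := by
  have hI : (⋂ n, C n).Nonempty :=
    IsCompact.nonempty_iInter_of_sequence_nonempty_isCompact_isClosed C
      (fun n => hanti n.le_succ) hne (hC 0).isClosed.isCompact fun n => (hC n).isClosed
  obtain ⟨p, hp⟩ := hX _ (.iInter_of_isOpen fun n => (hC n).isOpen) hI
  obtain ⟨D, hD, hpD, hDI⟩ := compact_exists_isClopen_in_isOpen isOpen_interior hp
  exact ⟨D, hD, ⟨p, hpD⟩, fun n => hDI.trans (interior_subset.trans (iInter_subset C n))⟩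

def SeparatesBelow (f : X ≃ₜ X) (g : ℕ → X ≃ₜ X) (n : ℕ) (W : ℕ → Set X) : Prop :=
  (∀ k < n, IsClopen (W k) ∧ (W k).Nonempty) ∧
    ∀ k < n, ∀ l < n, Disjoint (f '' W k) (g l '' W l)

theorem SeparatesBelow.exists_succ [PerfectSpace X] {f : X ≃ₜ X} {g : ℕ → X ≃ₜ X} {n : ℕ}
    {W : ℕ → Set X} (hW : SeparatesBelow f g n W) (hgn : g n ≠ f) :
    ∃ W', SeparatesBelow f g (n + 1) W' ∧ ∀ k < n, W' k ⊆ W k := by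
  obtain ⟨x, hx⟩ : ∃ x, f x ≠ g n x := by
    by_contra! h
    exact hgn (Homeomorph.ext fun x => (h x).symm)
  have hshrink : ∀ k < n, ∃ E, IsClopen E ∧ E.Nonempty ∧ E ⊆ W k ∧
      f x ∉ g k '' E ∧ g n x ∉ f '' E := fun k hk => by
    obtain ⟨E₁, hE₁, hne₁, hE₁W, hx₁⟩ :=
      (hW.1 k hk).1.exists_isClopen_subset_notMem (hW.1 k hk).2 ((g k).symm (f x))
    obtain ⟨E₂, hE₂, hne₂, hE₂E₁, hx₂⟩ := hE₁.exists_isClopen_subset_notMem hne₁ (f.symm (g n x))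
    refine ⟨E₂, hE₂, hne₂, hE₂E₁.trans hE₁W, ?_, ?_⟩
    · rw [Homeomorph.image_eq_preimage_symm]
      exact fun h => hx₁ (hE₂E₁ h)
    · rwa [Homeomorph.image_eq_preimage_symm]
  choose! E hE hEne hEW hfxE hgxE using hshrink
  obtain ⟨W₀, hW₀, hxW₀, hfg, hfM, hgN⟩ := exists_isClopen_nbhd_separating f.continuous
    (g n).continuous hx
    ((finite_Iio n).isClosed_biUnion fun k hk => (g k).isClosed_image.2 (hE k hk).isClosed)
    ((finite_Iio n).isClosed_biUnion fun k hk => f.isClosed_image.2 (hE k hk).isClosed)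
    (by simpa only [mem_iUnion₂, mem_Iio, not_exists] using hfxE)
    (by simpa only [mem_iUnion₂, mem_Iio, not_exists] using hgxE)
  refine ⟨Function.update E n W₀, ⟨fun k hk => ?_, fun k hk l hl => ?_⟩, fun k hk => ?_⟩
  · obtain hk | rfl := Nat.lt_succ_iff_lt_or_eq.1 hk
    · rw [Function.update_of_ne hk.ne]
      exact ⟨hE k hk, hEne k hk⟩
    · rw [Function.update_self]
      exact ⟨hW₀, x, hxW₀⟩
  · obtain hk | rfl := Nat.lt_succ_iff_lt_or_eq.1 hk <;>
      obtain hl | rfl := Nat.lt_succ_iff_lt_or_eq.1 hl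
    · rw [Function.update_of_ne hk.ne, Function.update_of_ne hl.ne]
      exact (hW.2 k hk l hl).mono (image_mono (hEW k hk)) (image_mono (hEW l hl))
    · rw [Function.update_of_ne hk.ne, Function.update_self]
      exact (hgN.mono_right (subset_biUnion_of_mem (u := fun k => f '' E k) (mem_Iio.2 hk))).symm
    · rw [Function.update_of_ne hl.ne, Function.update_self]
      exact hfM.mono_right (subset_biUnion_of_mem (u := fun l => g l '' E l) (mem_Iio.2 hl))
    · rw [Function.update_self]
      exact hfg
  · rw [Function.update_of_ne hk.ne]
    exact hEW k hk

theorem IsAlmostPSpace.exists_separating_family [PerfectSpace X] (hX : IsAlmostPSpace X)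
    {f : X ≃ₜ X} {g : ℕ → X ≃ₜ X} (hg : ∀ n, g n ≠ f) :
    ∃ V : ℕ → Set X, (∀ k, IsClopen (V k) ∧ (V k).Nonempty) ∧
      ∀ k l, Disjoint (f '' V k) (g l '' V l) := by
  choose! next hnext hsub using fun n (W : ℕ → Set X) (hW : SeparatesBelow f g n W) =>
    hW.exists_succ (hg n)
  let W : ℕ → ℕ → Set X := fun n => Nat.rec (fun _ => ∅) next n
  have hW : ∀ n, SeparatesBelow f g n (W n) := fun n =>
    Nat.rec ⟨nofun, nofun⟩ (fun n ih => hnext n _ ih) n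
  have hanti : ∀ k, Antitone fun i => W (k + 1 + i) k := fun k =>
    antitone_nat_of_succ_le fun i => hsub (k + 1 + i) _ (hW _) k (by omega)
  choose V hV hVne hVW using fun k => hX.exists_isClopen_subset_iInter
    (fun i => (hW (k + 1 + i)).1 k (by omega) |>.1)
    (fun i => (hW (k + 1 + i)).1 k (by omega) |>.2) (hanti k)
  have hVW' : ∀ k m, k < m → V k ⊆ W m k := fun k m hkm => by
    simpa [show k + 1 + (m - k - 1) = m by omega] using hVW k (m - k - 1)
  refine ⟨V, fun k => ⟨hV k, hVne k⟩, fun k l => ?_⟩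
  have hk : k < max k l + 1 := by omega
  have hl : l < max k l + 1 := by omega
  exact ((hW _).2 k hk l hl).mono (image_mono (hVW' k _ hk)) (image_mono (hVW' l _ hl))

theorem IsFSpace.exists_isOpen_of_separating_family (hX : IsFSpace X) {f : X ≃ₜ X}
    {g : ℕ → X ≃ₜ X} {V : ℕ → Set X} (hV : ∀ k, IsClopen (V k) ∧ (V k).Nonempty)
    (hfg : ∀ k l, Disjoint (f '' V k) (g l '' V l)) :
    ∃ N : Set (X ≃ₜ X), IsOpen N ∧ f ∈ N ∧ ∀ n, g n ∉ N := by
  obtain ⟨K, hK, hfK, hgK⟩ := hX.exists_isClopen_separating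
    (fun k => ⟨f.isClosed_image.2 (hV k).1.isClosed, f.isOpen_image.2 (hV k).1.isOpen⟩)
    (fun l => ⟨(g l).isClosed_image.2 (hV l).1.isClosed, (g l).isOpen_image.2 (hV l).1.isOpen⟩)
    hfg
  refine ⟨{h | MapsTo h (f ⁻¹' K) K}, isOpen_induced (ContinuousMap.isOpen_setOfPred_mapsTo
    (hK.isClosed.preimage f.continuous).isCompact hK.isOpen), fun x hx => hx, fun n hn => ?_⟩
  obtain ⟨p, hp⟩ := (hV n).2
  exact (hgK n).notMem_of_mem_left (hn (hfK n (mem_image_of_mem f hp))) (mem_image_of_mem _ hp)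

theorem Homeomorph.isClosed_of_countable [PerfectSpace X] (hF : IsFSpace X)
    (hP : IsAlmostPSpace X) {S : Set (X ≃ₜ X)} (hS : S.Countable) : IsClosed S := by
  refine isClosed_of_closure_subset fun f hf => ?_
  by_contra hfS
  obtain ⟨g, rfl⟩ := hS.exists_eq_range (closure_nonempty_iff.1 ⟨f, hf⟩)
  obtain ⟨V, hV, hfg⟩ := hP.exists_separating_family fun n h => hfS ⟨n, h⟩
  obtain ⟨N, hN, hfN, hgN⟩ := hF.exists_isOpen_of_separating_family hV hfg
  obtain ⟨_, hN', n, rfl⟩ := mem_closure_iff.1 hf N hN hfN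
  exact hgN n hN'

end ZeroDimensional

theorem isClosed_and_discrete_of_countable_isClosed {Y : Type*} [TopologicalSpace Y]
    (h : ∀ S : Set Y, S.Countable → IsClosed S) {A : Set Y} (hA : A.Countable) :
    IsClosed A ∧ ∀ y ∈ A, ∃ U : Set Y, IsOpen U ∧ U ∩ A = {y} := by
  refine ⟨h A hA, fun y hy => ⟨(A \ {y})ᶜ, (h _ (hA.mono sdiff_subset)).isOpen_compl, ?_⟩⟩
  ext z
  by_cases hz : z = y <;> simp [hz, hy]

section StoneCech

variable {α : Type*} [TopologicalSpace α]

theorem closure_image_preimage_stoneCechUnit {W : Set (StoneCech α)} (hW : IsClopen W) :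
    closure (stoneCechUnit '' (stoneCechUnit ⁻¹' W)) = W := by
  refine (closure_minimal (image_preimage_subset _ _) hW.isClosed).antisymm ?_
  rw [image_preimage_eq_inter_range]
  exact denseRange_stoneCechUnit.open_subset_closure_inter hW.isOpen

variable [DiscreteTopology α]

instance : ExtremallyDisconnected (StoneCech α) :=
  StoneCech.projective.extremallyDisconnected

theorem isOpen_singleton_stoneCechUnit (a : α) : IsOpen {stoneCechUnit a} := by
  obtain ⟨t, ht, hta⟩ := isInducing_stoneCechUnit.isOpen_iff.1 (isOpen_discrete {a})
  suffices t = {stoneCechUnit a} from this ▸ ht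
  refine Subset.antisymm ?_ (singleton_subset_iff.2 (by simp [← mem_preimage, hta]))
  calc t ⊆ closure (t ∩ range stoneCechUnit) :=
        denseRange_stoneCechUnit.open_subset_closure_inter ht
    _ = {stoneCechUnit a} := by
        rw [← image_preimage_eq_inter_range, hta, image_singleton, closure_singleton]

theorem isOpen_image_stoneCechUnit (s : Set α) : IsOpen (stoneCechUnit '' s) := by
  rw [← biUnion_of_singleton s, image_iUnion₂]
  simpa only [image_singleton] using isOpen_biUnion fun a _ => isOpen_singleton_stoneCechUnit a

theorem isClopen_closure_image_stoneCechUnit (s : Set α) :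
    IsClopen (closure (stoneCechUnit '' s)) :=
  ⟨isClosed_closure, ExtremallyDisconnected.open_closure _ (isOpen_image_stoneCechUnit s)⟩

theorem stoneCechUnit_mem_closure_image_iff {s : Set α} {a : α} :
    stoneCechUnit a ∈ closure (stoneCechUnit '' s) ↔ a ∈ s := by
  refine ⟨fun h => ?_, fun h => subset_closure (mem_image_of_mem _ h)⟩
  obtain ⟨_, rfl, b, hb, hba⟩ := mem_closure_iff.1 h _ (isOpen_singleton_stoneCechUnit a) rfl
  rwa [← injective_stoneCechUnit_of_t35Space hba]

theorem mem_closure_image_stoneCechUnit_iff {s : Set α} {p : StoneCech α} :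
    p ∈ closure (stoneCechUnit '' s) ↔ s ∈ comap stoneCechUnit (𝓝 p) := by
  refine ⟨fun h => mem_comap.2 ⟨_, (isClopen_closure_image_stoneCechUnit s).isOpen.mem_nhds h,
    fun a => stoneCechUnit_mem_closure_image_iff.1⟩, fun h => ?_⟩
  obtain ⟨t, ht, hts⟩ := mem_comap.1 h
  refine mem_closure_iff_nhds.2 fun u hu => ?_
  obtain ⟨a, hau, hat⟩ := denseRange_stoneCechUnit.mem_nhds (inter_mem hu ht)
  exact ⟨_, hau, a, hts hat, rfl⟩

theorem isOpen_range_stoneCechUnit : IsOpen (range (stoneCechUnit : α → StoneCech α)) :=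
  image_univ (f := (stoneCechUnit : α → StoneCech α)) ▸ isOpen_image_stoneCechUnit univ

theorem closure_image_stoneCechUnit_subset_range_iff {s : Set α} :
    closure (stoneCechUnit '' s) ⊆ range stoneCechUnit ↔ s.Finite := by
  refine ⟨fun h => ?_, fun h => ((h.image _).isClosed.closure_eq).trans_subset
    (image_subset_range _ _)⟩
  obtain ⟨t, ht⟩ := isClosed_closure.isCompact.elim_finite_subcover
    (fun a => {stoneCechUnit a}) (fun a => isOpen_singleton_stoneCechUnit a)
    (h.trans (range_subset_iff.2 fun a => mem_iUnion.2 ⟨a, rfl⟩))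
  refine t.finite_toSet.subset fun a ha => ?_
  obtain ⟨b, hb, hba⟩ := mem_iUnion₂.1 (ht (subset_closure (mem_image_of_mem _ ha)))
  rwa [injective_stoneCechUnit_of_t35Space hba]

instance : CompactSpace (CechStoneRemainder α) :=
  isCompact_iff_compactSpace.1 isOpen_range_stoneCechUnit.isClosed_compl.isCompact

end StoneCech

namespace CechStoneRemainder

variable {α : Type*} [TopologicalSpace α]

/-- The set usually written `s*`. -/
def basicSet (s : Set α) : Set (CechStoneRemainder α) :=
  Subtype.val ⁻¹' closure (stoneCechUnit '' s)

theorem basicSet_mono : Monotone (basicSet : Set α → Set (CechStoneRemainder α)) :=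
  fun _ _ h => preimage_mono (closure_mono (image_mono h))

theorem basicSet_union (s t : Set α) : basicSet (s ∪ t) = basicSet s ∪ basicSet t := by
  simp only [basicSet, image_union, closure_union, preimage_union]

variable [DiscreteTopology α]

theorem isClopen_basicSet (s : Set α) : IsClopen (basicSet s) :=
  (isClopen_closure_image_stoneCechUnit s).preimage continuous_subtype_val

theorem mem_basicSet_iff {s : Set α} {p : CechStoneRemainder α} :
    p ∈ basicSet s ↔ s ∈ comap stoneCechUnit (𝓝 (p : StoneCech α)) :=
  mem_closure_image_stoneCechUnit_iff

theorem basicSet_inter (s t : Set α) : basicSet (s ∩ t) = basicSet s ∩ basicSet t := by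
  ext p
  simp only [mem_basicSet_iff, mem_inter_iff, inter_mem_iff]

theorem basicSet_eq_empty_iff {s : Set α} : basicSet s = ∅ ↔ s.Finite := by
  rw [← closure_image_stoneCechUnit_subset_range_iff, eq_empty_iff_forall_notMem]
  refine ⟨fun h q hq => ?_, fun h p hp => p.2 (h hp)⟩
  by_contra hr
  exact h ⟨q, hr⟩ hq

theorem basicSet_nonempty_iff {s : Set α} : (basicSet s).Nonempty ↔ s.Infinite := by
  rw [nonempty_iff_ne_empty, Ne, basicSet_eq_empty_iff, Set.Infinite]

theorem basicSet_subset_of_diff_finite {s t : Set α} (h : (s \ t).Finite) :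
    basicSet s ⊆ basicSet t :=
  calc basicSet s ⊆ basicSet (t ∪ s \ t) :=
        basicSet_mono (by rw [union_sdiff_self]; exact subset_union_right)
    _ = basicSet t := by rw [basicSet_union, basicSet_eq_empty_iff.2 h, union_empty]

theorem exists_basicSet_eq {C : Set (CechStoneRemainder α)} (hC : IsClopen C) :
    ∃ s : Set α, basicSet s = C := by
  obtain ⟨U, hU, rfl⟩ := isOpen_induced_iff.1 hC.isOpen
  have hclosed : IsClosed (Subtype.val '' (Subtype.val ⁻¹' U : Set (CechStoneRemainder α))) :=
    isOpen_range_stoneCechUnit.isClosed_compl.isClosedEmbedding_subtypeVal.isClosedMap _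
      hC.isClosed
  obtain ⟨W, hW, hCW, hWU⟩ := exists_clopen_of_closed_subset_open hclosed hU
    (image_preimage_subset _ _)
  refine ⟨stoneCechUnit ⁻¹' W, ?_⟩
  rw [basicSet, closure_image_preimage_stoneCechUnit hW]
  exact (preimage_mono hWU).antisymm fun p hp => hCW (mem_image_of_mem _ hp)

instance : PerfectSpace (CechStoneRemainder α) := by
  refine perfectSpace_iff_forall_not_isolated.2 fun p => ⟨fun hp => ?_⟩
  obtain ⟨s, hs⟩ := exists_basicSet_eq
    ⟨isClosed_singleton, (isOpen_singleton_iff_punctured_nhds p).2 hp⟩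
  obtain ⟨t, u, hts, hus, htu, ht, hu⟩ :=
    (basicSet_nonempty_iff.1 (hs ▸ singleton_nonempty p)).exists_disjoint_infinite_subsets
  have hmem : ∀ r ⊆ s, r.Infinite → p ∈ basicSet r := fun r hr hinf => by
    obtain ⟨q, hq⟩ := basicSet_nonempty_iff.2 hinf
    have hqp : q ∈ ({p} : Set _) := hs ▸ basicSet_mono hr hq
    rwa [← eq_of_mem_singleton hqp]
  have hp : p ∈ basicSet (t ∩ u) := by
    rw [basicSet_inter]
    exact ⟨hmem t hts ht, hmem u hus hu⟩
  rwa [htu.inter_eq, basicSet_eq_empty_iff.2 finite_empty] at hp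

theorem exists_iUnion_basicSet_eq {U : Set (CechStoneRemainder α)} (hU : IsOpen U)
    (hσ : IsFsigma U) : ∃ s : ℕ → Set α, ⋃ n, basicSet (s n) = U := by
  obtain ⟨F, hF, rfl⟩ := hσ
  choose C hC hFC hCU using fun n =>
    exists_clopen_of_closed_subset_open (hF n) hU (subset_iUnion F n)
  choose s hs using fun n => exists_basicSet_eq (hC n)
  exact ⟨s, (iUnion_subset fun n => hs n ▸ hCU n).antisymm (iUnion_mono fun n => hs n ▸ hFC n)⟩

theorem isFSpace : IsFSpace (CechStoneRemainder α) := by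
  intro U V hU hV hUσ hVσ hUV
  obtain ⟨s, rfl⟩ := exists_iUnion_basicSet_eq hU hUσ
  obtain ⟨t, rfl⟩ := exists_iUnion_basicSet_eq hV hVσ
  have hst : ∀ k l, (s k ∩ t l).Finite := fun k l => basicSet_eq_empty_iff.1 <| by
    rw [basicSet_inter]
    exact (hUV.mono (subset_iUnion _ k) (subset_iUnion _ l)).inter_eq
  obtain ⟨c, hsc, hct⟩ := exists_almost_separating s t hst
  have hc := isClopen_basicSet c
  refine Disjoint.mono
    (closure_minimal (iUnion_subset fun k => basicSet_subset_of_diff_finite (hsc k)) hc.isClosed)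
    (closure_minimal (iUnion_subset fun l => ?_) hc.isOpen.isClosed_compl) disjoint_compl_right
  rw [subset_compl_iff_disjoint_left, disjoint_iff_inter_eq_empty, ← basicSet_inter,
    basicSet_eq_empty_iff]
  exact hct l

end CechStoneRemainder

open CechStoneRemainder in
theorem OmegaStar.isAlmostPSpace : IsAlmostPSpace OmegaStar := by
  rintro G hG ⟨p, hp⟩
  obtain ⟨O, hO, rfl⟩ := isGδ_iff_eq_iInter_nat.1 hG
  choose C hC hpC hCO using fun n =>
    compact_exists_isClopen_in_isOpen (hO n) (mem_iInter.1 hp n)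
  choose s hs using fun n => exists_basicSet_eq (hC n)
  have hinf : ∀ n, (⋂ k ≤ n, s k).Infinite := fun n => basicSet_nonempty_iff.1
    ⟨p, mem_basicSet_iff.2 <| (biInter_mem (finite_Iic n)).2 fun k _ =>
      mem_basicSet_iff.1 (hs k ▸ hpC k)⟩
  obtain ⟨r, hr, hrs⟩ := Nat.exists_infinite_diff_finite_of_biInter_infinite hinf
  refine (basicSet_nonempty_iff.2 hr).mono
    (interior_maximal (subset_iInter fun n => ?_) (isClopen_basicSet r).isOpen)
  exact (basicSet_subset_of_diff_finite (hrs n)).trans (hs n ▸ hCO n)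

/-- Every countable subset of `H(ω*)` is closed and discrete. -/
theorem countable_subsets_homeoOmegaStar_closed_discrete
    (A : Set (OmegaStar ≃ₜ OmegaStar)) (hA : A.Countable) :
    IsClosed A ∧
    ∀ f ∈ A, ∃ U : Set (OmegaStar ≃ₜ OmegaStar), IsOpen U ∧ U ∩ A = {f} :=
  isClosed_and_discrete_of_countable_isClosed (fun _ hS =>
    Homeomorph.isClosed_of_countable CechStoneRemainder.isFSpace OmegaStar.isAlmostPSpace hS) hA
end

section
/- The topological group 2^ω, the product of countably many copies of the two-element discrete group ℤ/2ℤ with the product topology, is not topologically isomorphic to any subgroup of H(ω*), the group of self-homeomorphisms of ω* = βω \ ω with the compact-open topology. -/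
open Set Topology TopologicalSpace

/-!
Model `ω*` as the space of nonprincipal ultrafilters on `ℕ`; its clopen sets are exactly the sets
`A* = {u | A ∈ u}`. The unit vectors `eₙ` tend to `0` in `2^ω`, so an embedding `φ` would give
homeomorphisms `hₙ = φ eₙ ≠ id` converging to the identity, hence eventually mapping every `A*`
into itself. That is impossible. The sets `W` such that eventually every `hₙ` is supported in `W*`
form a proper filter; refine it to an ultrafilter `p`. For `W ∉ p` infinitely many `hₙ` move points
outside `W*`, which lets one choose recursively increasing `nⱼ` and infinite `cⱼ`, `dⱼ` with
`h_{nⱼ}(cⱼ*) = dⱼ*`, every `cᵢ` disjoint from every `dⱼ`, and `cⱼ ∪ dⱼ ∉ p`. For `B = ⋃ cⱼ`, the map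
`h_{nⱼ}` sends the nonempty set `cⱼ* ⊆ B*` into `dⱼ*`, which misses `B*`; so `B*` is not eventually
preserved.
-/

open Filter

theorem tendsto_pi_single_cofinite {ι M : Type*} [DecidableEq ι] [TopologicalSpace M] [Zero M]
    (x : M) : Tendsto (fun i => Pi.single i x) cofinite (𝓝 (0 : ι → M)) :=
  tendsto_pi_nhds.2 fun j => tendsto_const_nhds.congr' <|
    (finite_singleton j).eventually_cofinite_notMem.mono fun i (hi : i ≠ j) => by
      simp [hi.symm]

theorem Homeomorph.eventually_mapsTo_of_tendsto_one {X ι : Type*} [TopologicalSpace X]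
    {l : Filter ι} {k : ι → X ≃ₜ X} (hk : Tendsto k l (𝓝 1)) {U : Set X} (hUc : IsCompact U)
    (hUo : IsOpen U) : ∀ᶠ i in l, MapsTo (k i) U U :=
  hk <| IsOpen.mem_nhds (isOpen_induced (ContinuousMap.isOpen_setOfPred_mapsTo hUc hUo))
    (mapsTo_id U)

theorem Set.Infinite.exists_disjoint_infinite_subsets_s19 {α : Type*} {c : Set α} (hc : c.Infinite) :
    ∃ c₁ ⊆ c, ∃ c₂ ⊆ c, Disjoint c₁ c₂ ∧ c₁.Infinite ∧ c₂.Infinite := by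
  let f : ℕ → α := fun n => hc.natEmbedding c n
  have hf : Function.Injective f := Subtype.val_injective.comp (hc.natEmbedding c).injective
  have hmem : ∀ s, f '' s ⊆ c := fun s => image_subset_iff.2 fun n _ => (hc.natEmbedding c n).2
  have hinf : ∀ r < 2, {n : ℕ | n % 2 = r}.Infinite := fun r hr =>
    infinite_of_forall_exists_gt fun n =>
      ⟨2 * n + 2 + r, by simp only [mem_ofPred_eq]; omega, by omega⟩
  refine ⟨f '' {n | n % 2 = 0}, hmem _, f '' {n | n % 2 = 1}, hmem _, ?_,
    (hinf 0 two_pos).image hf.injOn, (hinf 1 one_lt_two).image hf.injOn⟩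
  exact (disjoint_image_iff hf).2 (disjoint_left.2 fun n h₀ h₁ => by simp_all)

section StoneCech

variable (α : Type*) [TopologicalSpace α] [DiscreteTopology α]

noncomputable def ultrafilterHomeomorphStoneCech : Ultrafilter α ≃ₜ StoneCech α where
  toFun := Ultrafilter.extend stoneCechUnit
  invFun := stoneCechExtend (continuous_of_discreteTopology (f := (pure : α → Ultrafilter α)))
  left_inv := congrFun <| denseRange_pure.equalizer
    ((continuous_stoneCechExtend _).comp (continuous_ultrafilter_extend _)) continuous_id <|
    funext fun x => by simp [ultrafilter_extend_pure, stoneCechExtend_stoneCechUnit]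
  right_inv := congrFun <| stoneCech_hom_ext
    ((continuous_ultrafilter_extend _).comp (continuous_stoneCechExtend _)) continuous_id <|
    funext fun x => by simp [ultrafilter_extend_pure, stoneCechExtend_stoneCechUnit]
  continuous_toFun := continuous_ultrafilter_extend _
  continuous_invFun := continuous_stoneCechExtend _

theorem ultrafilterHomeomorphStoneCech_comp_pure :
    ultrafilterHomeomorphStoneCech α ∘ pure = stoneCechUnit :=
  ultrafilter_extend_extends _

end StoneCech

theorem Ultrafilter.isOpen_range_pure {α : Type*} : IsOpen (range (pure : α → Ultrafilter α)) := by
  have : range (pure : α → Ultrafilter α) = ⋃ x, {u | {x} ∈ u} := by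
    ext u
    simp only [mem_range, mem_iUnion, mem_ofPred_eq]
    exact exists_congr fun x =>
      ⟨fun h => h ▸ rfl, fun h => (Ultrafilter.coe_le_coe.1 (le_pure_iff.2 h)).symm⟩
  rw [this]
  exact isOpen_iUnion fun x => ultrafilter_isOpen_basic _

abbrev NonprincipalUltrafilter (α : Type*) : Type _ :=
  {u : Ultrafilter α // u ∉ Set.range pure}

noncomputable def NonprincipalUltrafilter.homeomorphCechStoneRemainder (α : Type*)
    [TopologicalSpace α] [DiscreteTopology α] :
    NonprincipalUltrafilter α ≃ₜ CechStoneRemainder α :=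
  (ultrafilterHomeomorphStoneCech α).subtype fun u => by
    rw [← ultrafilterHomeomorphStoneCech_comp_pure, range_comp,
      (ultrafilterHomeomorphStoneCech α).injective.mem_set_image]

namespace NonprincipalUltrafilter

variable {α : Type*}

def starSet (A : Set α) : Set (NonprincipalUltrafilter α) := {u | A ∈ u.1}

theorem le_cofinite (u : NonprincipalUltrafilter α) : (u.1 : Filter α) ≤ cofinite :=
  u.1.le_cofinite_or_eq_pure.resolve_right fun ⟨a, ha⟩ => u.2 ⟨a, ha.symm⟩

theorem starSet_mono {A B : Set α} (h : A ⊆ B) : starSet A ⊆ starSet B :=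
  fun _ hu => mem_of_superset hu h

theorem starSet_inter (A B : Set α) : starSet (A ∩ B) = starSet A ∩ starSet B :=
  ext fun _ => inter_mem_iff

theorem starSet_union (A B : Set α) : starSet (A ∪ B) = starSet A ∪ starSet B :=
  ext fun _ => Ultrafilter.union_mem_iff

theorem starSet_compl (A : Set α) : starSet Aᶜ = (starSet A)ᶜ :=
  ext fun _ => Ultrafilter.compl_mem_iff_notMem

theorem starSet_biUnion {ι : Type*} {s : Set ι} (hs : s.Finite) (A : ι → Set α) :
    starSet (⋃ i ∈ s, A i) = ⋃ i ∈ s, starSet (A i) :=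
  ext fun u => by
    simp only [starSet, mem_ofPred_eq, Ultrafilter.finite_biUnion_mem_iff hs, mem_iUnion,
      exists_prop]

theorem starSet_nonempty_iff {A : Set α} : (starSet A).Nonempty ↔ A.Infinite := by
  refine ⟨fun ⟨u, hu⟩ hA =>
    Ultrafilter.compl_mem_iff_notMem.1 (le_cofinite u hA.compl_mem_cofinite) hu, fun hA => ?_⟩
  have := hA.cofinite_inf_principal_neBot
  have hle := Ultrafilter.of_le (cofinite ⊓ 𝓟 A)
  refine ⟨⟨Ultrafilter.of (cofinite ⊓ 𝓟 A), ?_⟩, hle (mem_inf_of_right (mem_principal_self A))⟩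
  rintro ⟨x, hx⟩
  have hx' := hle.trans inf_le_left (finite_singleton x).compl_mem_cofinite
  rw [← hx] at hx'
  exact hx' rfl

theorem starSet_eq_empty_iff {A : Set α} : starSet A = ∅ ↔ A.Finite := by
  rw [← not_nonempty_iff_eq_empty, starSet_nonempty_iff, not_infinite]

theorem disjoint_starSet_iff {A B : Set α} :
    Disjoint (starSet A) (starSet B) ↔ (A ∩ B).Finite := by
  rw [disjoint_iff_inter_eq_empty, ← starSet_inter, starSet_eq_empty_iff]

theorem starSet_diff_of_finite (A : Set α) {F : Set α} (hF : F.Finite) :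
    starSet (A \ F) = starSet A := by
  rw [sdiff_eq, starSet_inter, starSet_compl, starSet_eq_empty_iff.2 hF, compl_empty, inter_univ]

theorem isClopen_starSet (A : Set α) : IsClopen (starSet A) :=
  ⟨(ultrafilter_isClosed_basic A).preimage continuous_subtype_val,
    (ultrafilter_isOpen_basic A).preimage continuous_subtype_val⟩

theorem isTopologicalBasis_range_starSet :
    IsTopologicalBasis (range (starSet : Set α → Set (NonprincipalUltrafilter α))) := by
  have := (ultrafilterBasis_is_basis (α := α)).isInducing
    (Topology.IsInducing.subtypeVal (t := (range pure)ᶜ))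
  rwa [ultrafilterBasis, ← range_comp] at this

instance : CompactSpace (NonprincipalUltrafilter α) :=
  isCompact_iff_compactSpace.1 Ultrafilter.isOpen_range_pure.isClosed_compl.isCompact

theorem exists_starSet_eq_of_isClopen {V : Set (NonprincipalUltrafilter α)} (hV : IsClopen V) :
    ∃ A, V = starSet A := by
  obtain ⟨s, hs, rfl⟩ := eq_finite_iUnion_of_isTopologicalBasis_of_isCompact_open _
    isTopologicalBasis_range_starSet V hV.isClosed.isCompact hV.isOpen
  exact ⟨⋃ A ∈ s, A, (starSet_biUnion hs id).symm⟩

section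

variable {h : NonprincipalUltrafilter α ≃ₜ NonprincipalUltrafilter α}

theorem exists_mem_disjoint_image_starSet {W : Set α}
    (hW : MapsTo h (starSet Wᶜ) (starSet Wᶜ)) {u : NonprincipalUltrafilter α}
    (huW : u ∈ starSet Wᶜ) (hu : h u ≠ u) :
    ∃ c ∈ u.1, Disjoint c W ∧ Disjoint (h '' starSet c) (starSet (W ∪ c)) := by
  obtain ⟨s, hsu, hs⟩ : ∃ s ∈ u.1, s ∉ (h u).1 := by
    by_contra! H
    exact hu (Subtype.ext (Ultrafilter.coe_le_coe.1 H))
  have hO : IsOpen (starSet s ∩ h ⁻¹' starSet sᶜ) :=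
    (isClopen_starSet s).isOpen.inter ((isClopen_starSet sᶜ).isOpen.preimage h.continuous)
  obtain ⟨_, ⟨t, rfl⟩, htu, ht⟩ := isTopologicalBasis_range_starSet.exists_subset_of_mem_open
    (show u ∈ starSet s ∩ h ⁻¹' starSet sᶜ from ⟨hsu, Ultrafilter.compl_mem_iff_notMem.2 hs⟩) hO
  refine ⟨t ∩ Wᶜ, inter_mem htu huW, disjoint_compl_left.mono_left inter_subset_right, ?_⟩
  rw [disjoint_left, forall_mem_image]
  intro v hv
  have hvW : h v ∈ (starSet W)ᶜ := starSet_compl W ▸ hW (starSet_mono inter_subset_right hv)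
  have hvs : h v ∈ (starSet s)ᶜ := starSet_compl s ▸ (ht (starSet_mono inter_subset_left hv)).2
  rw [starSet_union, mem_union, not_or]
  exact ⟨hvW, fun hhv => hvs (ht (starSet_mono inter_subset_left hhv)).1⟩

theorem exists_image_starSet_eq_disjoint {c S : Set α}
    (hS : Disjoint (h '' starSet c) (starSet S)) :
    ∃ d, h '' starSet c = starSet d ∧ Disjoint d S := by
  obtain ⟨d, hd⟩ := exists_starSet_eq_of_isClopen (V := h '' starSet c) (by
    rw [h.image_eq_preimage_symm]; exact (isClopen_starSet c).preimage h.symm.continuous)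
  rw [hd, disjoint_starSet_iff] at hS
  refine ⟨d \ S, ?_, disjoint_sdiff_left⟩
  rw [hd, ← sdiff_self_inter, starSet_diff_of_finite d hS]

theorem exists_subset_image_starSet_eq_notMem {p : Ultrafilter α}
    (hp : (p : Filter α) ≤ cofinite) {c₀ S : Set α} (hc₀ : c₀.Infinite) (hc₀S : c₀ ⊆ S)
    (hS : Disjoint (h '' starSet c₀) (starSet S)) :
    ∃ c ⊆ c₀, ∃ d, c.Infinite ∧ h '' starSet c = starSet d ∧ Disjoint d S ∧ c ∪ d ∉ p := by
  obtain ⟨c₁, hc₁, c₂, hc₂, h₁₂, hinf₁, hinf₂⟩ := hc₀.exists_disjoint_infinite_subsets_s19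
  have hd : ∀ c ⊆ c₀, ∃ d, h '' starSet c = starSet d ∧ Disjoint d S := fun c hc =>
    exists_image_starSet_eq_disjoint (hS.mono_left (image_mono (starSet_mono hc)))
  obtain ⟨d₁, hd₁, hd₁S⟩ := hd c₁ hc₁
  obtain ⟨d₂, hd₂, hd₂S⟩ := hd c₂ hc₂
  have hfin : (d₁ ∩ d₂).Finite := by
    rw [← disjoint_starSet_iff, ← hd₁, ← hd₂, disjoint_image_iff h.injective, disjoint_starSet_iff,
      h₁₂.inter_eq]
    exact finite_empty
  have hsub : (c₁ ∪ d₁) ∩ (c₂ ∪ d₂) ⊆ d₁ ∩ d₂ := by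
    rintro x ⟨hx₁ | hx₁, hx₂ | hx₂⟩
    · exact (disjoint_left.1 h₁₂ hx₁ hx₂).elim
    · exact (disjoint_left.1 hd₂S hx₂ (hc₀S (hc₁ hx₁))).elim
    · exact (disjoint_left.1 hd₁S hx₁ (hc₀S (hc₂ hx₂))).elim
    · exact ⟨hx₁, hx₂⟩
  -- `c₁ ∪ d₁` and `c₂ ∪ d₂` are almost disjoint, so they cannot both belong to `p`.
  by_contra! H
  have hmem := inter_mem (H c₁ hc₁ d₁ hinf₁ hd₁ hd₁S) (H c₂ hc₂ d₂ hinf₂ hd₂ hd₂S)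
  exact Ultrafilter.compl_mem_iff_notMem.1 (hp (hfin.subset hsub).compl_mem_cofinite) hmem

end

section Dynamics

variable (k : ℕ → NonprincipalUltrafilter α ≃ₜ NonprincipalUltrafilter α)

def eventualSupport : Filter α where
  sets := {W | ∀ᶠ n in atTop, ∀ u, k n u ≠ u → u ∈ starSet W}
  univ_sets := Eventually.of_forall fun _ _ _ => univ_mem
  sets_of_superset hW hWW' := hW.mono fun _ h u hu => starSet_mono hWW' (h u hu)
  inter_sets hW hW' := (hW.and hW').mono fun _ h u hu => inter_mem (h.1 u hu) (h.2 u hu)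

theorem eventualSupport_le_cofinite : eventualSupport k ≤ cofinite :=
  fun _ hW => show ∀ᶠ _ in atTop, _ from Eventually.of_forall fun _ u _ => le_cofinite u hW

theorem neBot_eventualSupport (hk : ∃ᶠ n in atTop, k n ≠ Homeomorph.refl _) :
    (eventualSupport k).NeBot := by
  refine ⟨fun h => hk ?_⟩
  have hempty : ∅ ∈ eventualSupport k := h ▸ mem_bot
  refine (show ∀ᶠ n in atTop, ∀ u, k n u ≠ u → u ∈ starSet (∅ : Set α) from hempty).mono
    fun n hn => not_not.2 <| Homeomorph.ext fun u => not_not.1 fun hu => empty_notMem _ (hn u hu)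

variable {k}

theorem frequently_exists_ne_of_notMem {p : Ultrafilter α} (hp : ↑p ≤ eventualSupport k)
    {W : Set α} (hW : W ∉ p) : ∃ᶠ n in atTop, ∃ u ∈ starSet Wᶜ, k n u ≠ u := by
  by_contra h
  refine hW (hp (show ∀ᶠ n in atTop, _ from (not_frequently.1 h).mono fun n hn u hu => ?_))
  by_contra huW
  exact hn ⟨u, (starSet_compl W).symm ▸ huW, hu⟩

theorem exists_gt_image_starSet_eq_of_notMem
    (hk : ∀ A, ∀ᶠ n in atTop, MapsTo (k n) (starSet A) (starSet A))
    {p : Ultrafilter α} (hp : ↑p ≤ eventualSupport k) {W : Set α} (hW : W ∉ p) (N : ℕ) :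
    ∃ n c d, N < n ∧ c.Infinite ∧ k n '' starSet c = starSet d ∧ Disjoint c d ∧
      Disjoint (c ∪ d) W ∧ c ∪ d ∉ p := by
  obtain ⟨n, ⟨u, huW, hu⟩, hmaps, hN⟩ := ((frequently_exists_ne_of_notMem hp hW).and_eventually
    ((hk Wᶜ).and (eventually_gt_atTop N))).exists
  obtain ⟨c₀, hc₀u, hc₀W, hc₀⟩ := exists_mem_disjoint_image_starSet hmaps huW hu
  obtain ⟨c, hc, d, hinf, hcd, hdS, hcdp⟩ := exists_subset_image_starSet_eq_notMem
    (hp.trans (eventualSupport_le_cofinite k)) (starSet_nonempty_iff.1 ⟨u, hc₀u⟩)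
    subset_union_right hc₀
  obtain ⟨hdW, hdc₀⟩ := disjoint_union_right.1 hdS
  exact ⟨n, c, d, hN, hinf, hcd, (hdc₀.mono_right hc).symm,
    disjoint_union_left.2 ⟨hc₀W.mono_left hc, hdW⟩, hcdp⟩

theorem exists_seq_image_starSet_eq_disjoint
    (hk : ∀ A, ∀ᶠ n in atTop, MapsTo (k n) (starSet A) (starSet A))
    (hk' : ∃ᶠ n in atTop, k n ≠ Homeomorph.refl _) :
    ∃ (n : ℕ → ℕ) (c d : ℕ → Set α), StrictMono n ∧ (∀ j, (c j).Infinite) ∧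
      (∀ j, k (n j) '' starSet (c j) = starSet (d j)) ∧ ∀ i j, Disjoint (c i) (d j) := by
  have := neBot_eventualSupport k hk'
  set p := Ultrafilter.of (eventualSupport k)
  obtain ⟨f, hfP, hfr⟩ := exists_seq_of_forall_finset_exists
    (fun x : ℕ × Set α × Set α => x.2.1.Infinite ∧ k x.1 '' starSet x.2.1 = starSet x.2.2 ∧
      Disjoint x.2.1 x.2.2 ∧ x.2.1 ∪ x.2.2 ∉ p)
    (fun x y => x.1 < y.1 ∧ Disjoint (x.2.1 ∪ x.2.2) (y.2.1 ∪ y.2.2)) fun s hs => by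
      have hW : ⋃ x ∈ s, (x.2.1 ∪ x.2.2) ∉ p := by
        rw [← Finset.set_biUnion_coe, Ultrafilter.finite_biUnion_mem_iff s.finite_toSet]
        exact fun ⟨x, hx, hxp⟩ => (hs x hx).2.2.2 hxp
      obtain ⟨n, c, d, hN, hc, hcd, hcd', hcdW, hcdp⟩ :=
        exists_gt_image_starSet_eq_of_notMem hk (Ultrafilter.of_le _) hW (s.sup Prod.fst)
      exact ⟨(n, c, d), ⟨hc, hcd, hcd', hcdp⟩, fun x hx =>
        ⟨(Finset.le_sup hx).trans_lt hN, (hcdW.mono_right (subset_biUnion_of_mem hx)).symm⟩⟩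
  refine ⟨fun j => (f j).1, fun j => (f j).2.1, fun j => (f j).2.2, fun i j hij => (hfr i j hij).1,
    fun j => (hfP j).1, fun j => (hfP j).2.1, fun i j => ?_⟩
  rcases lt_trichotomy i j with hij | rfl | hij
  · exact (hfr i j hij).2.mono subset_union_left subset_union_right
  · exact (hfP i).2.2.1
  · exact (hfr j i hij).2.symm.mono subset_union_left subset_union_right

theorem eventually_eq_refl_of_eventually_mapsTo
    (hk : ∀ A, ∀ᶠ n in atTop, MapsTo (k n) (starSet A) (starSet A)) :
    ∀ᶠ n in atTop, k n = Homeomorph.refl _ := by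
  by_contra hk'
  obtain ⟨n, c, d, hn, hc, hcd, hdisj⟩ :=
    exists_seq_image_starSet_eq_disjoint hk (not_eventually.1 hk')
  obtain ⟨M, hM⟩ := eventually_atTop.1 (hk (⋃ i, c i))
  obtain ⟨u, hu⟩ := starSet_nonempty_iff.2 (hc M)
  have hd : k (n M) u ∈ starSet (d M) := hcd M ▸ mem_image_of_mem _ hu
  have hB : k (n M) u ∈ starSet (⋃ i, c i) :=
    hM _ (hn.id_le M) (starSet_mono (subset_iUnion c M) hu)
  have hBd : Disjoint (⋃ i, c i) (d M) := disjoint_iUnion_left.2 fun i => hdisj i M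
  exact (disjoint_starSet_iff.2 (by rw [hBd.inter_eq]; exact finite_empty)).ne_of_mem hB hd rfl

end Dynamics

end NonprincipalUltrafilter

theorem CechStoneRemainder.eventually_eq_one_of_tendsto_one {α : Type*} [TopologicalSpace α]
    [DiscreteTopology α] {k : ℕ → CechStoneRemainder α ≃ₜ CechStoneRemainder α}
    (hk : Tendsto k atTop (𝓝 1)) : ∀ᶠ n in atTop, k n = 1 := by
  let Θ := NonprincipalUltrafilter.homeomorphCechStoneRemainder α
  have hpres : ∀ A, ∀ᶠ n in atTop, MapsTo ((Θ.trans (k n)).trans Θ.symm)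
      (NonprincipalUltrafilter.starSet A) (NonprincipalUltrafilter.starSet A) := fun A => by
    have hA := NonprincipalUltrafilter.isClopen_starSet A
    filter_upwards [Homeomorph.eventually_mapsTo_of_tendsto_one hk
      (hA.isClosed.isCompact.image Θ.continuous) (Θ.isOpenMap _ hA.isOpen)] with n hn u hu
    simpa [Θ.image_eq_preimage_symm] using hn (mem_image_of_mem Θ hu)
  filter_upwards [NonprincipalUltrafilter.eventually_eq_refl_of_eventually_mapsTo hpres] with n hn
  refine Homeomorph.ext fun x => Θ.symm.injective ?_
  simpa using DFunLike.congr_fun hn (Θ.symm x)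

/-- The topological group `2^ω` (the product of countably many copies
of the discrete two-element group) is not topologically isomorphic to any subgroup of
`H(ω*)`: there is no group homomorphism from it to `H(ω*)` that is a topological
embedding. -/
theorem cantorGroup_not_subgroup_homeoOmegaStar :
    ¬ ∃ φ : Multiplicative (ℕ → ZMod 2) →* (OmegaStar ≃ₜ OmegaStar),
        Topology.IsEmbedding ⇑φ := by
  rintro ⟨φ, hφ⟩
  have hlim : Tendsto (fun n => φ (.ofAdd (Pi.single n 1))) atTop (𝓝 1) := by
    have := (continuous_ofAdd.tendsto 0).comp (tendsto_pi_single_cofinite (ι := ℕ) (1 : ZMod 2))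
    rw [Nat.cofinite_eq_atTop, ofAdd_zero] at this
    rw [← φ.map_one]
    exact (hφ.continuous.tendsto 1).comp this
  obtain ⟨n, hn⟩ := (CechStoneRemainder.eventually_eq_one_of_tendsto_one hlim).exists
  have : Pi.single n (1 : ZMod 2) = 0 :=
    Multiplicative.ofAdd.injective (hφ.injective (hn.trans φ.map_one.symm))
  exact one_ne_zero (Pi.single_eq_zero_iff.1 this)
end
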